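/- Let a ∈ (0, 1/2) with a ≠ 1/4 and set a1 = a2 = a3 = a. Then the positive solutions (x1, x2, x3) of system (S) are exactly the positive multiples of the four triples (1, 1, 1), (1-2a, 2a, 2a), (2a, 1-2a, 2a), and (2a, 2a, 1-2a); i.e., (x1,x2,x3) solves (S) with x1, x2, x3 > 0 if and only if there is q > 0 such that (x1,x2,x3) equals q times one of these four triples. -/
import Mathlib


noncomputable section
open Real Set

/-- First equation of system (S). -/
def eqS1 (a1 a2 a3 x1 x2 x3 : ℝ) : Prop :=
  (a2 + a3)*(a1*x2^2 + a1*x3^2 - x2*x3) + (a2*x2 + a3*x3)*x1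
    - (a1*a2 + a1*a3 + 2*a2*a3)*x1^2 = 0

/-- Second equation of system (S). -/
def eqS2 (a1 a2 a3 x1 x2 x3 : ℝ) : Prop :=
  (a1 + a3)*(a2*x1^2 + a2*x3^2 - x1*x3) + (a1*x1 + a3*x3)*x2
    - (a1*a2 + 2*a1*a3 + a2*a3)*x2^2 = 0

theorem equal_parameters_four_solutions (a : ℝ) (ha0 : 0 < a) (ha : a < 1/2)
    (hne : a ≠ 1/4) (x1 x2 x3 : ℝ) (hx1 : 0 < x1) (hx2 : 0 < x2) (hx3 : 0 < x3) :
    (eqS1 a a a x1 x2 x3 ∧ eqS2 a a a x1 x2 x3) ↔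
      ∃ q : ℝ, 0 < q ∧
        ((x1 = q ∧ x2 = q ∧ x3 = q) ∨
         (x1 = (1 - 2*a)*q ∧ x2 = 2*a*q ∧ x3 = 2*a*q) ∨
         (x1 = 2*a*q ∧ x2 = (1 - 2*a)*q ∧ x3 = 2*a*q) ∨
         (x1 = 2*a*q ∧ x2 = 2*a*q ∧ x3 = (1 - 2*a)*q)) := by
  have ha' : a ≠ 0 := ne_of_gt ha0
  have h12 : (0:ℝ) < 1 - 2*a := by linarith
  constructor
  · rintro ⟨h1, h2⟩
    unfold eqS1 at h1; unfold eqS2 at h2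
    have key : (3*a) * ((x2 - x1) * (2*a*(x1+x2) - x3)) = 0 := by
      linear_combination h1 - h2
    have key2 : (x2 - x1) * (2*a*(x1+x2) - x3) = 0 := by
      rcases mul_eq_zero.mp key with h | h
      · exfalso; have : a = 0 := by linarith
        exact ha' this
      · exact h
    rcases mul_eq_zero.mp key2 with h | h
    · -- x2 = x1
      have hx21 : x1 = x2 := by linarith [sub_eq_zero.mp h]
      subst hx21
      have fac : a * ((x3 - x1) * (2*a*x3 - (1 - 2*a)*x1)) = 0 := by
        linear_combination h1
      have fac2 : (x3 - x1) * (2*a*x3 - (1 - 2*a)*x1) = 0 :=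
        (mul_eq_zero.mp fac).resolve_left ha'
      rcases mul_eq_zero.mp fac2 with h' | h'
      · exact ⟨x1, hx1, Or.inl ⟨rfl, rfl, by linarith⟩⟩
      · refine ⟨x1/(2*a), by positivity, Or.inr (Or.inr (Or.inr ⟨?_, ?_, ?_⟩))⟩
        · field_simp
        · field_simp
        · field_simp; linarith
    · -- x3 = 2a(x1+x2)
      have hx3' : x3 = 2*a*(x1+x2) := by linarith [sub_eq_zero.mp h]
      subst hx3'
      have fac : (a*(1+2*a)) * ((x1 - 2*a*(x1+x2)) * (x1 - (1-2*a)*(x1+x2))) = 0 := by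
        linear_combination -h1
      have fac2 : (x1 - 2*a*(x1+x2)) * (x1 - (1-2*a)*(x1+x2)) = 0 := by
        rcases mul_eq_zero.mp fac with h' | h'
        · exfalso; nlinarith
        · exact h'
      rcases mul_eq_zero.mp fac2 with h' | h'
      · refine ⟨x1+x2, by linarith, Or.inr (Or.inr (Or.inl ⟨by linarith, by linarith, by ring⟩))⟩
      · refine ⟨x1+x2, by linarith, Or.inr (Or.inl ⟨by linarith, by linarith, by ring⟩)⟩
  · rintro ⟨q, hq, h | h | h | h⟩ <;>
      obtain ⟨e1, e2, e3⟩ := h <;> subst e1 <;> subst e2 <;> subst e3 <;>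
      exact ⟨by unfold eqS1; ring, by unfold eqS2; ring⟩
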